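/- arXiv:1605.07101 — 2 statements merged into one kernel-verified Lean document; each statement's English description precedes it below -/
import Mathlib

section
/- Let ω be a free ultrafilter on ℕ, let (n_k) be a sequence of positive integers with n_k → ∞, and let (c_i)_{i ∈ ℕ*} be a sequence of real numbers. Then there exists a sequence of permutations p_k of {1,…,n_k} such that for every i ∈ ℕ*, cyc_i(p_k) converges to c_i along ω, if and only if c_i ≥ 0 for every i ∈ ℕ* and ∑_{i ∈ ℕ*} c_i ≤ 1. -/
/-!
Necessity: the sets of points lying in cycles of different lengths are disjoint, so the
proportions `cyc_i` are nonnegative with finite partial sums at most one, and limits preserve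
this. Sufficiency: on `n` points take `⌊c_i n / i⌋` cycles of length `i` for each `i ≤ k` and
close up with a single cycle on the remaining points. That last cycle perturbs the number of
points in `i`-cycles by at most `i`, so `|cyc_i - c_i| ≤ i / n`, which tends to zero; a free
ultrafilter refines the cofinite filter, so convergence along `ω` follows.
-/

open Filter Finset Function Topology

theorem Function.Semiconj.minimalPeriod_eq {α β : Type*} {f : α → α} {g : β → β} {h : α → β}
    (hs : Semiconj h f g) (hinj : Injective h) (x : α) :
    minimalPeriod g (h x) = minimalPeriod f x := by
  rw [minimalPeriod_eq_minimalPeriod_iff]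
  intro m
  simp only [IsPeriodicPt, IsFixedPt, ← (hs.iterate_right m).eq]
  exact hinj.eq_iff

open Fin.NatCast in
theorem finRotate_succ_iterate (n t : ℕ) (x : Fin (n + 1)) :
    (finRotate (n + 1))^[t] x = x + t := by
  induction t with
  | zero => simp
  | succ t ih =>
    rw [iterate_succ_apply', ih, finRotate_apply, Nat.cast_succ, add_assoc]

theorem minimalPeriod_finRotate (n : ℕ) (x : Fin n) : minimalPeriod (finRotate n) x = n := by
  obtain _ | n := n
  · exact x.elim0
  refine Nat.dvd_right_iff_eq.1 fun t => ?_
  rw [← isPeriodicPt_iff_minimalPeriod_dvd, IsPeriodicPt, IsFixedPt, finRotate_succ_iterate,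
    add_eq_left, Fin.natCast_eq_zero]

namespace Equiv.Perm

variable {α β : Type*} [Fintype α] [Fintype β]

noncomputable def periodCount (p : Perm α) (t : ℕ) : ℕ :=
  #{x | minimalPeriod p x = t}

theorem sum_periodCount_le_card (p : Perm α) (s : Finset ℕ) :
    ∑ t ∈ s, p.periodCount t ≤ Fintype.card α := by
  simp only [periodCount, sum_card_fiberwise_eq_card_filter]
  exact card_le_univ _

theorem periodCount_permCongr (e : α ≃ β) (p : Perm α) (t : ℕ) :
    (e.permCongr p).periodCount t = p.periodCount t := by
  have hs : Semiconj e p (e.permCongr p) := fun x => by simp [permCongr_apply]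
  refine (card_equiv e fun x => ?_).symm
  simp [hs.minimalPeriod_eq e.injective]

theorem periodCount_sumCongr (p : Perm α) (q : Perm β) (t : ℕ) :
    (sumCongr p q).periodCount t = p.periodCount t + q.periodCount t := by
  have hl : Semiconj Sum.inl p (sumCongr p q) := fun _ => rfl
  have hr : Semiconj Sum.inr q (sumCongr p q) := fun _ => rfl
  simp only [periodCount, card_filter, Fintype.sum_sum_type, hl.minimalPeriod_eq Sum.inl_injective,
    hr.minimalPeriod_eq Sum.inr_injective]

theorem periodCount_finRotate (n t : ℕ) :
    (finRotate n).periodCount t = if n = t then n else 0 := by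
  simp only [periodCount, minimalPeriod_finRotate]
  split_ifs with h <;> simp [h]

theorem exists_periodCount_eq_mul_count (m : Multiset ℕ) :
    ∃ p : Perm (Fin m.sum), ∀ t, p.periodCount t = t * m.count t := by
  induction m using Multiset.induction_on with
  | empty => exact ⟨1, fun t => by simp [periodCount, Subsingleton.elim _ (∅ : Finset (Fin 0))]⟩
  | cons a m ih =>
    obtain ⟨q, hq⟩ := ih
    let e : Fin (a ::ₘ m).sum ≃ Fin a ⊕ Fin m.sum := Fintype.equivOfCardEq (by simp)
    refine ⟨e.symm.permCongr (sumCongr (finRotate a) q), fun t => ?_⟩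
    rw [periodCount_permCongr, periodCount_sumCongr, periodCount_finRotate, hq,
      Multiset.count_cons]
    rcases eq_or_ne t a with rfl | h
    · simp only [if_true]; ring
    · simp [h, h.symm]

end Equiv.Perm

open Equiv Perm

theorem natCast_mul_floor_div_le {x : ℝ} (hx : 0 ≤ x) (i : ℕ) : (i * ⌊x / i⌋₊ : ℝ) ≤ x := by
  rcases i.eq_zero_or_pos with rfl | hi
  · simpa using hx
  calc (i * ⌊x / i⌋₊ : ℝ) ≤ i * (x / i) := by gcongr; exact Nat.floor_le (by positivity)
    _ = x := by field_simp

theorem lt_natCast_mul_floor_div_add {i : ℕ} (hi : 0 < i) (x : ℝ) : x < i * ⌊x / i⌋₊ + i := by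
  have hi' : (0 : ℝ) < i := by exact_mod_cast hi
  calc x = i * (x / i) := by field_simp
    _ < i * (⌊x / i⌋₊ + 1) := by gcongr; exact Nat.lt_floor_add_one _
    _ = i * ⌊x / i⌋₊ + i := by ring

theorem exists_perm_abs_periodCount_sub_le (n : ℕ) (s : Finset ℕ) (c : ℕ → ℝ)
    (hs : ∀ i ∈ s, 0 < i) (hc₀ : ∀ i ∈ s, 0 ≤ c i) (hc : ∑ i ∈ s, c i ≤ 1) :
    ∃ p : Perm (Fin n), ∀ i ∈ s, |(p.periodCount i : ℝ) - c i * n| ≤ i := by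
  set b : ℕ → ℕ := fun i => ⌊c i * n / i⌋₊
  have hb : ∑ i ∈ s, i * b i ≤ n := by
    have : (∑ i ∈ s, i * b i : ℝ) ≤ n := calc
      (∑ i ∈ s, i * b i : ℝ) ≤ ∑ i ∈ s, c i * n :=
        sum_le_sum fun i hi => natCast_mul_floor_div_le (by have := hc₀ i hi; positivity) i
      _ = (∑ i ∈ s, c i) * n := (sum_mul ..).symm
      _ ≤ n := mul_le_of_le_one_left (by positivity) hc
    exact_mod_cast this
  set r := n - ∑ i ∈ s, i * b i
  set m : Multiset ℕ := (∑ i ∈ s, Multiset.replicate (b i) i) + {r}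
  have hm : m.sum = n := by
    simp only [m, Multiset.sum_add, Multiset.sum_sum, Multiset.sum_replicate, smul_eq_mul,
      Multiset.sum_singleton, r, mul_comm (b _)]
    omega
  obtain ⟨p, hp⟩ := exists_periodCount_eq_mul_count m
  refine ⟨(finCongr hm).permCongr p, fun i hi => ?_⟩
  have hcount : m.count i = b i + if i = r then 1 else 0 := by
    simp [m, Multiset.count_sum', Multiset.count_replicate, Multiset.count_singleton, hi]
  have hlow := natCast_mul_floor_div_le (mul_nonneg (hc₀ i hi) n.cast_nonneg) i
  have hhigh := lt_natCast_mul_floor_div_add (hs i hi) (c i * n)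
  rw [periodCount_permCongr, hp, hcount, abs_sub_le_iff]
  split_ifs <;> push_cast <;> constructor <;> nlinarith

noncomputable def cyc {n : ℕ} (p : Equiv.Perm (Fin n)) (i : ℕ) : ℝ :=
  ((Finset.univ.filter fun x : Fin n => Function.minimalPeriod (⇑p) x = i).card : ℝ) / n

theorem cyc_eq_periodCount_div {n : ℕ} (p : Perm (Fin n)) (i : ℕ) :
    cyc p i = p.periodCount i / n := rfl

theorem cyc_nonneg {n : ℕ} (p : Perm (Fin n)) (i : ℕ) : 0 ≤ cyc p i := by
  rw [cyc_eq_periodCount_div]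
  positivity

theorem sum_cyc_le_one {n : ℕ} (p : Perm (Fin n)) (s : Finset ℕ) : ∑ i ∈ s, cyc p i ≤ 1 := by
  simp only [cyc_eq_periodCount_div, ← sum_div]
  refine div_le_one_of_le₀ ?_ n.cast_nonneg
  exact_mod_cast (p.sum_periodCount_le_card s).trans_eq (Fintype.card_fin n)

theorem tendsto_cyc_of_abs_periodCount_sub_le {n : ℕ → ℕ} (hn : Tendsto n atTop atTop)
    (p : ∀ k, Perm (Fin (n k))) {x : ℝ} {i : ℕ}
    (h : ∀ᶠ k in atTop, |((p k).periodCount i : ℝ) - x * n k| ≤ i) :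
    Tendsto (fun k => cyc (p k) i) atTop (𝓝 x) := by
  rw [tendsto_iff_norm_sub_tendsto_zero]
  refine squeeze_zero' (.of_forall fun _ => norm_nonneg _) ?_
    ((tendsto_const_div_atTop_nhds_zero_nat (i : ℝ)).comp hn)
  filter_upwards [h, hn.eventually_gt_atTop 0] with k hk hnk
  have hnk' : (0 : ℝ) < n k := by exact_mod_cast hnk
  have : cyc (p k) i - x = ((p k).periodCount i - x * n k) / n k := by
    rw [cyc_eq_periodCount_div]
    field_simp
  rw [Real.norm_eq_abs, this, abs_div, Nat.abs_cast, comp_apply]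
  gcongr

theorem exists_permutation_sequence_with_cycles_general (ω : Ultrafilter ℕ)
    (hω : (ω : Filter ℕ) ≤ Filter.cofinite)
    (n : ℕ → ℕ) (hn' : Tendsto n atTop atTop)
    (c : ℕ → ℝ) :
    (∃ p : ∀ k, Equiv.Perm (Fin (n k)),
        ∀ i : ℕ, 0 < i →
          Tendsto (fun k => cyc (p k) i) (ω : Filter ℕ) (nhds (c i))) ↔
      (∀ i : ℕ, 0 < i → 0 ≤ c i) ∧ (∀ N : ℕ, ∑ i ∈ Finset.Icc 1 N, c i ≤ 1) := by
  constructor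
  · rintro ⟨p, hp⟩
    refine ⟨fun i hi => ge_of_tendsto (hp i hi) (.of_forall fun k => cyc_nonneg _ _),
      fun N => le_of_tendsto (tendsto_finsetSum _ fun i hi => hp i (mem_Icc.1 hi).1)
        (.of_forall fun k => sum_cyc_le_one _ _)⟩
  · rintro ⟨hc₀, hc⟩
    have hω_atTop : (ω : Filter ℕ) ≤ atTop := Nat.cofinite_eq_atTop ▸ hω
    choose p hp using fun k => exists_perm_abs_periodCount_sub_le (n k) (Icc 1 k) c
      (fun i hi => (mem_Icc.1 hi).1) (fun i hi => hc₀ i (mem_Icc.1 hi).1) (hc k)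
    refine ⟨p, fun i hi => (tendsto_cyc_of_abs_periodCount_sub_le hn' p ?_).mono_left hω_atTop⟩
    filter_upwards [eventually_ge_atTop i] with k hk using hp k i (mem_Icc.2 ⟨hi, hk⟩)

/-- Let `ω` be a free ultrafilter on `ℕ`, `(n k)` positive integers with
`n k → ∞`, and `(c i)_{i ∈ ℕ*}` real numbers. There is a sequence of permutations `p k` of
`{1, …, n k}` with `cyc_i (p k) → c i` along `ω` for every `i ∈ ℕ*` iff `c i ≥ 0` for all
`i ∈ ℕ*` and `∑_{i ∈ ℕ*} c i ≤ 1` (expressed via all finite partial sums). -/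
theorem exists_permutation_sequence_with_cycles (ω : Ultrafilter ℕ)
    (hω : (ω : Filter ℕ) ≤ Filter.cofinite)
    (n : ℕ → ℕ) (hn : ∀ k, 0 < n k) (hn' : Tendsto n atTop atTop)
    (c : ℕ → ℝ) :
    (∃ p : ∀ k, Equiv.Perm (Fin (n k)),
        ∀ i : ℕ, 0 < i →
          Tendsto (fun k => cyc (p k) i) (ω : Filter ℕ) (nhds (c i))) ↔
      (∀ i : ℕ, 0 < i → 0 ≤ c i) ∧ (∀ N : ℕ, ∑ i ∈ Finset.Icc 1 N, c i ≤ 1) :=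
  exists_permutation_sequence_with_cycles_general ω hω n hn' c
end

section
/- For i ∈ ℕ*, let λ_i = (1/i)∑_{ζ^i = 1} δ_ζ be the uniform probability measure on the i-th roots of unity in the unit circle S¹, and let λ_∞ be the normalized Haar (Lebesgue) probability measure on S¹. Let (μ_j) be a sequence of finite convex combinations of measures from the set {λ_i : i ∈ ℕ*} ∪ {λ_∞}, and let μ be a Borel probability measure on S¹ such that μ_j(A) → μ(A) as j → ∞ for every Borel set A ⊆ S¹. Then there exist nonnegative reals (c_i)_{i ∈ ℕ*} and c_∞ with c_∞ + ∑_{i ∈ ℕ*} c_i = 1 such that μ = c_∞·λ_∞ + ∑_{i ∈ ℕ*} c_i·λ_i. -/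
/-!
Let `Q` be the countable set of roots of unity. Haar measure does not charge `Q` while every `λᵢ`
lives on `Q`, so off `Q` the approximants are `t_∞⁽ʲ⁾ λ_∞`, which forces `μ|_{Qᶜ} = μ(Qᶜ) λ_∞`.
On `Q`, pass to a subsequence along which every coefficient `tᵢ⁽ʲ⁾` converges to some `cᵢ`
(compactness of `[0,1]^ℕ`). Since `λᵢ{q} ≤ 1/i` and the coefficients have total mass at most `1`,
no mass escapes to `i = ∞` in `μⱼ{q} = ∑ tᵢ⁽ʲ⁾ λᵢ{q}`, hence `μ{q} = ∑ cᵢ λᵢ{q}`; a measure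
on a countable set is determined by its atoms.
-/

open MeasureTheory Filter

/-- `λᵢ = (1/i) ∑_{ζ^i = 1} δ_ζ`, the uniform probability measure on the `i`-th roots of
unity (a Borel measure on `ℂ` supported on the unit circle `S¹`). -/
noncomputable def rootMeasure (i : ℕ) : Measure ℂ :=
  (i : ENNReal)⁻¹ • ∑ ζ ∈ (Polynomial.nthRoots i (1 : ℂ)).toFinset, Measure.dirac ζ

/-- `λ_∞`, the normalized Haar (Lebesgue) probability measure on the unit circle `S¹ ⊆ ℂ`,
realized as the pushforward of normalized Lebesgue measure on `[0, 2π)` under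
`θ ↦ exp(iθ)`. -/
noncomputable def haarCircleMeasure : Measure ℂ :=
  Measure.map (fun θ : ℝ => Complex.exp (θ * Complex.I))
    ((ENNReal.ofReal (2 * Real.pi))⁻¹ • volume.restrict (Set.Ico 0 (2 * Real.pi)))

open Set Topology
open scoped ENNReal NNReal

theorem ENNReal.eq_tsum_mul_of_tendsto {α : Type*} {l : Filter α} [l.NeBot]
    {s : α → ℕ → ℝ≥0∞} {c a : ℕ → ℝ≥0∞} {L : ℝ≥0∞}
    (hs : ∀ j, ∑' i, s j i ≤ 1) (hc : ∀ i, Tendsto (s · i) l (𝓝 (c i)))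
    (ha : Tendsto a atTop (𝓝 0)) (ha_top : ∀ i, a i ≠ ∞)
    (hL : Tendsto (fun j => ∑' i, s j i * a i) l (𝓝 L)) :
    L = ∑' i, c i * a i := by
  have hpartial (M : ℕ) : Tendsto (fun j => ∑ i ∈ Finset.range M, s j i * a i) l
      (𝓝 (∑ i ∈ Finset.range M, c i * a i)) :=
    tendsto_finsetSum _ fun i _ => ENNReal.Tendsto.mul_const (hc i) (Or.inr (ha_top i))
  refine le_antisymm (ENNReal.le_of_forall_pos_le_add fun ε hε _ => ?_)
    (ENNReal.tsum_le_of_sum_range_le fun M =>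
      le_of_tendsto_of_tendsto' (hpartial M) hL fun j => ENNReal.sum_le_tsum _)
  obtain ⟨M, hM⟩ := eventually_atTop.1 (ENNReal.tendsto_nhds_zero.1 ha ε (by exact_mod_cast hε))
  have htail (j : α) : ∑' i, s j i * a i ≤ ∑ i ∈ Finset.range M, s j i * a i + ε := by
    rw [← ENNReal.summable.sum_add_tsum_nat_add' (k := M)]
    gcongr
    calc ∑' i, s j (i + M) * a (i + M)
        ≤ ∑' i, s j (i + M) * ε := by gcongr with i; exact hM _ (Nat.le_add_left M i)
      _ = (∑' i, s j (i + M)) * ε := ENNReal.tsum_mul_right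
      _ ≤ 1 * ε := by
        gcongr
        exact (ENNReal.tsum_comp_le_tsum_of_injective (add_left_injective M) _).trans (hs j)
      _ = ε := one_mul _
  calc L ≤ ∑ i ∈ Finset.range M, c i * a i + ε :=
        le_of_tendsto_of_tendsto' hL ((hpartial M).add tendsto_const_nhds) htail
    _ ≤ ∑' i, c i * a i + ε := by gcongr; exact ENNReal.sum_le_tsum _

lemma MeasureTheory.Measure.restrict_eq_restrict_of_countable {α : Type*} [MeasurableSpace α]
    [MeasurableSingletonClass α] {μ ν : Measure α} {s : Set α} (hs : s.Countable)
    (h : ∀ x ∈ s, μ {x} = ν {x}) : μ.restrict s = ν.restrict s := by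
  ext A hA
  have hAs : (A ∩ s).Countable := hs.mono inter_subset_right
  have hsum (m : Measure α) : ∑' x : ↥(A ∩ s), m {(x : α)} = m (A ∩ s) :=
    tsum_measure_preimage_singleton hAs (f := id) fun _ _ => measurableSet_singleton _
  rw [Measure.restrict_apply hA, Measure.restrict_apply hA, ← hsum, ← hsum]
  exact tsum_congr fun x => h x x.2.2

def unitRoots : Set ℂ := {z | ∃ n, 0 < n ∧ z ^ n = 1}

lemma countable_unitRoots : unitRoots.Countable := by
  refine (countable_iUnion fun n => (Polynomial.nthRootsFinset n (1 : ℂ)).countable_toSet).mono ?_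
  rintro z ⟨n, hn, hz⟩
  exact mem_iUnion.2 ⟨n, (Polynomial.mem_nthRootsFinset hn 1).2 hz⟩

lemma measurableSet_unitRoots : MeasurableSet unitRoots :=
  countable_unitRoots.measurableSet

lemma rootMeasure_eq_nthRootsFinset (i : ℕ) :
    rootMeasure i = (i : ℝ≥0∞)⁻¹ • ∑ ζ ∈ Polynomial.nthRootsFinset i (1 : ℂ), Measure.dirac ζ := by
  rw [rootMeasure, Polynomial.nthRootsFinset_def]

@[simp]
lemma rootMeasure_zero : rootMeasure 0 = 0 := by
  simp [rootMeasure_eq_nthRootsFinset]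

lemma rootMeasure_compl_unitRoots (i : ℕ) : rootMeasure i unitRootsᶜ = 0 := by
  rcases Nat.eq_zero_or_pos i with rfl | hi
  · simp
  simp only [rootMeasure_eq_nthRootsFinset, Measure.smul_apply, Measure.finsetSum_apply,
    Measure.dirac_apply' _ measurableSet_unitRoots.compl]
  simpa using fun ζ hζ ↦ ⟨i, hi, (Polynomial.mem_nthRootsFinset hi 1).1 hζ⟩

lemma rootMeasure_univ {i : ℕ} (hi : 0 < i) : rootMeasure i univ = 1 := by
  have hcard := (Complex.isPrimitiveRoot_exp i hi.ne').card_nthRootsFinset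
  simp [rootMeasure_eq_nthRootsFinset, Measure.finsetSum_apply, hcard, ENNReal.inv_mul_cancel,
    hi.ne']

lemma rootMeasure_singleton_le (i : ℕ) (q : ℂ) : rootMeasure i {q} ≤ (i : ℝ≥0∞)⁻¹ := by
  classical
  rw [rootMeasure_eq_nthRootsFinset, Measure.smul_apply, Measure.finsetSum_apply, smul_eq_mul]
  refine mul_le_of_le_one_right' ?_
  simp only [Measure.dirac_apply' _ (measurableSet_singleton q), indicator, mem_singleton_iff,
    Pi.one_apply]
  rw [Finset.sum_ite_eq']
  split_ifs <;> simp

instance (i : ℕ) : IsFiniteMeasure (rootMeasure i) := by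
  rcases Nat.eq_zero_or_pos i with rfl | hi
  · simp only [rootMeasure_zero]; infer_instance
  · exact ⟨(rootMeasure_univ hi).trans_lt ENNReal.one_lt_top⟩

lemma tendsto_rootMeasure_singleton (q : ℂ) :
    Tendsto (fun i => rootMeasure i {q}) atTop (𝓝 0) :=
  tendsto_of_tendsto_of_tendsto_of_le_of_le tendsto_const_nhds ENNReal.tendsto_inv_nat_nhds_zero
    (fun _ => zero_le) fun i => rootMeasure_singleton_le i q

instance : IsProbabilityMeasure haarCircleMeasure := by
  refine ⟨?_⟩
  rw [haarCircleMeasure, Measure.map_apply (by fun_prop) MeasurableSet.univ, preimage_univ,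
    Measure.smul_apply, Measure.restrict_apply_univ, Real.volume_Ico, sub_zero, smul_eq_mul]
  exact ENNReal.inv_mul_cancel (by simp [Real.pi_pos]) ENNReal.ofReal_ne_top

lemma injOn_exp_mul_I : InjOn (fun θ : ℝ => Complex.exp (θ * Complex.I)) (Ico 0 (2 * Real.pi)) := by
  convert injOn_circleMap_of_abs_sub_le' (a := 0) (b := 2 * Real.pi) (c := 0) one_ne_zero
    (by simp) using 1
  ext θ
  simp [circleMap]

instance : NullSingletonClass haarCircleMeasure := by
  refine ⟨fun z => ?_⟩
  rw [haarCircleMeasure, Measure.map_apply (by fun_prop) (measurableSet_singleton z),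
    Measure.smul_apply, Measure.restrict_apply' measurableSet_Ico,
    Subsingleton.measure_zero, smul_zero]
  exact fun x hx y hy => injOn_exp_mul_I hx.2 hy.2 (hx.1.trans hy.1.symm)

noncomputable def circleMixture (a : ℝ≥0) (b : ℕ → ℝ≥0) : Measure ℂ :=
  a • haarCircleMeasure + Measure.sum fun i => b i • rootMeasure i

lemma add_finsetSum_eq_circleMixture (a : ℝ≥0) (t : ℕ → ℝ≥0) (S : Finset ℕ) :
    a • haarCircleMeasure + ∑ i ∈ S, t i • rootMeasure i
      = circleMixture a ((S : Set ℕ).indicator t) := by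
  rw [circleMixture]
  congr 1
  ext A
  rw [Measure.finsetSum_apply, Measure.sum_apply_of_countable, sum_eq_tsum_indicator]
  congr 1 with i
  by_cases hi : i ∈ S <;> simp [hi]

lemma sum_smul_rootMeasure_restrict_unitRoots (c : ℕ → ℝ≥0) :
    (Measure.sum fun i => c i • rootMeasure i).restrict unitRoots
      = Measure.sum fun i => c i • rootMeasure i := by
  rw [Measure.restrict_sum _ measurableSet_unitRoots]
  congr with i : 1
  rw [Measure.restrict_smul,
    Measure.restrict_eq_self_of_ae_mem (ae_iff.2 (rootMeasure_compl_unitRoots i))]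

lemma circleMixture_restrict_compl_unitRoots (a : ℝ≥0) (b : ℕ → ℝ≥0) :
    (circleMixture a b).restrict unitRootsᶜ = a • haarCircleMeasure := by
  rw [circleMixture, Measure.restrict_add, Measure.restrict_smul,
    countable_unitRoots.measure_restrict_compl,
    Measure.restrict_sum _ measurableSet_unitRoots.compl]
  simp [Measure.restrict_eq_zero.2 (rootMeasure_compl_unitRoots _)]

lemma sum_smul_rootMeasure_apply (c : ℕ → ℝ≥0) (A : Set ℂ) :
    (Measure.sum fun i => c i • rootMeasure i) A = ∑' i, c i * rootMeasure i A := by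
  simp [Measure.sum_apply_of_countable]

lemma circleMixture_singleton (a : ℝ≥0) (b : ℕ → ℝ≥0) (q : ℂ) :
    circleMixture a b {q} = ∑' i, b i * rootMeasure i {q} := by
  simp [circleMixture]

lemma sum_smul_rootMeasure_univ {c : ℕ → ℝ≥0} (hc : c 0 = 0) :
    (Measure.sum fun i => c i • rootMeasure i) univ = ∑' i, (c i : ℝ≥0∞) := by
  rw [sum_smul_rootMeasure_apply]
  congr 1 with i
  rcases Nat.eq_zero_or_pos i with rfl | hi
  · simp [hc]
  · simp [rootMeasure_univ hi]

lemma restrict_compl_unitRoots_eq_of_tendsto {α : Type*} {l : Filter α} [l.NeBot]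
    {a : α → ℝ≥0} {b : α → ℕ → ℝ≥0} {μ : Measure ℂ}
    (h : ∀ A, MeasurableSet A → Tendsto (fun j => circleMixture (a j) (b j) A) l (𝓝 (μ A))) :
    μ.restrict unitRootsᶜ = μ unitRootsᶜ • haarCircleMeasure := by
  have hdiffuse (A : Set ℂ) (hA : MeasurableSet A) :
      Tendsto (fun j => (a j : ℝ≥0∞) * haarCircleMeasure A) l (𝓝 (μ.restrict unitRootsᶜ A)) := by
    simpa [← Measure.restrict_apply hA, circleMixture_restrict_compl_unitRoots]
      using h _ (hA.inter measurableSet_unitRoots.compl)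
  have hweight : Tendsto (fun j => (a j : ℝ≥0∞)) l (𝓝 (μ unitRootsᶜ)) := by
    simpa using hdiffuse univ MeasurableSet.univ
  ext A hA
  exact tendsto_nhds_unique (hdiffuse A hA)
    (ENNReal.Tendsto.mul_const hweight (Or.inr (measure_ne_top _ _)))

lemma exists_restrict_unitRoots_eq_of_tendsto {a : ℕ → ℝ≥0} {b : ℕ → ℕ → ℝ≥0} {μ : Measure ℂ}
    (hb : ∀ j, ∑' i, (b j i : ℝ≥0∞) ≤ 1) (hb0 : ∀ j, b j 0 = 0)
    (h : ∀ q, Tendsto (fun j => circleMixture (a j) (b j) {q}) atTop (𝓝 (μ {q}))) :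
    ∃ c : ℕ → ℝ≥0, c 0 = 0 ∧
      μ.restrict unitRoots = Measure.sum fun i => c i • rootMeasure i := by
  have hb_le (j i : ℕ) : b j i ≤ 1 := by
    exact_mod_cast (ENNReal.le_tsum i).trans (hb j)
  obtain ⟨c, -, φ, hφ, hc⟩ := (isCompact_univ_pi fun _ => isCompact_Icc).tendsto_subseq
    fun j i _ => show b j i ∈ Icc 0 1 from ⟨zero_le, hb_le j i⟩
  have hci (i : ℕ) : Tendsto (fun j => (b (φ j) i : ℝ≥0∞)) atTop (𝓝 (c i)) :=
    ENNReal.tendsto_coe.2 (tendsto_pi_nhds.1 hc i)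
  refine ⟨c, ?_, ?_⟩
  · exact ENNReal.coe_injective (tendsto_nhds_unique (hci 0) (by simp [hb0]))
  rw [← sum_smul_rootMeasure_restrict_unitRoots c]
  refine Measure.restrict_eq_restrict_of_countable countable_unitRoots fun q _ => ?_
  rw [sum_smul_rootMeasure_apply]
  refine ENNReal.eq_tsum_mul_of_tendsto (fun j => hb (φ j)) hci (tendsto_rootMeasure_singleton q)
    (fun i => measure_ne_top _ _) ?_
  simpa only [circleMixture_singleton, Function.comp_def] using (h q).comp hφ.tendsto_atTop

/-- If a Borel probability measure `μ` on the unit circle is the setwise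
limit of a sequence of finite convex combinations of the measures
`{λᵢ : i ∈ ℕ*} ∪ {λ_∞}`, then `μ` itself is a (countable) convex combination
`μ = c_∞ λ_∞ + ∑_{i ∈ ℕ*} cᵢ λᵢ` with nonnegative coefficients summing to `1`. -/
theorem setwise_limit_of_convex_combinations (μseq : ℕ → Measure ℂ)
    (hconv : ∀ j, ∃ (t : ℕ → NNReal) (tinf : NNReal) (N : ℕ),
      t 0 = 0 ∧
      tinf + ∑ i ∈ Finset.range (N + 1), t i = 1 ∧
      μseq j = tinf • haarCircleMeasure +
        ∑ i ∈ Finset.range (N + 1), t i • rootMeasure i)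
    (μ : Measure ℂ) [IsProbabilityMeasure μ]
    (hlim : ∀ A : Set ℂ, MeasurableSet A →
      Tendsto (fun j => μseq j A) atTop (nhds (μ A))) :
    ∃ (c : ℕ → NNReal) (cinf s : NNReal),
      c 0 = 0 ∧ HasSum c s ∧ cinf + s = 1 ∧
      μ = cinf • haarCircleMeasure + Measure.sum (fun i => c i • rootMeasure i) := by
  choose t tinf N ht0 hsum hμseq using hconv
  set b : ℕ → ℕ → ℝ≥0 := fun j => (Finset.range (N j + 1) : Set ℕ).indicator (t j)
  simp only [hμseq, add_finsetSum_eq_circleMixture] at hlim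
  have hb (j : ℕ) : ∑' i, (b j i : ℝ≥0∞) ≤ 1 := by
    have hle : ∑ i ∈ Finset.range (N j + 1), t j i ≤ 1 := hsum j ▸ le_add_self
    calc ∑' i, (b j i : ℝ≥0∞) = ∑ i ∈ Finset.range (N j + 1), (t j i : ℝ≥0∞) := by
          rw [sum_eq_tsum_indicator]
          simp only [b, ENNReal.coe_indicator]
      _ ≤ 1 := by exact_mod_cast hle
  obtain ⟨c, hc0, hatomic⟩ := exists_restrict_unitRoots_eq_of_tendsto hb
    (fun j => by simp [b, ht0]) fun q => hlim {q} (measurableSet_singleton q)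
  have hdiffuse := restrict_compl_unitRoots_eq_of_tendsto hlim
  have hmass : ∑' i, (c i : ℝ≥0∞) = μ unitRoots := by
    rw [← sum_smul_rootMeasure_univ hc0, ← hatomic, Measure.restrict_apply_univ]
  have hc : Summable c := ENNReal.tsum_coe_ne_top_iff_summable.1 (hmass ▸ measure_ne_top _ _)
  refine ⟨c, (μ unitRootsᶜ).toNNReal, ∑' i, c i, hc0, hc.hasSum, ?_, ?_⟩
  · apply ENNReal.coe_injective
    rw [ENNReal.coe_add, ENNReal.coe_toNNReal (measure_ne_top _ _), ENNReal.coe_tsum hc, hmass,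
      add_comm, measure_add_measure_compl measurableSet_unitRoots, measure_univ, ENNReal.coe_one]
  · rw [ENNReal.smul_def, ENNReal.coe_toNNReal (measure_ne_top _ _), ← hdiffuse, ← hatomic,
      add_comm, Measure.restrict_add_restrict_compl measurableSet_unitRoots]
end
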